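/- The relative entropy of nonlocality is a Bell nonlocality monotone: for every no-signaling behavior P in the (r,s) Bell scenario and every LOSR wiring W from the (r,s) scenario to the (r_f,s_f) scenario, S_nl(W(P)) ≤ S_nl(P); moreover S_nl(Q) = 0 for every local behavior Q. -/

import Mathlib

open scoped ENNReal
open Finset

/-- A probability distribution on a finite type. -/
def IsDist {Z : Type*} [Fintype Z] (p : Z → ℝ) : Prop :=
  (∀ z, 0 ≤ p z) ∧ ∑ z, p z = 1

/-- Relative entropy (Kullback-Leibler divergence) of finitely supported
distributions, valued in `[0,∞]`, with the conventions `0·log(0/t) = 0` and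
`S(p‖q) = ∞` whenever `q` vanishes at a point where `p` does not. -/
noncomputable def relEnt {Z : Type*} [Fintype Z] (p q : Z → ℝ) : ℝ≥0∞ :=
  if ∃ z, p z ≠ 0 ∧ q z = 0 then ⊤
  else ENNReal.ofReal (∑ z, p z * Real.log (p z / q z))

/-- A behavior in the (r,s) Bell scenario: `P a b x y = P(a,b|x,y)`. -/
def IsBehavior {r s : ℕ} (P : Fin r → Fin r → Fin s → Fin s → ℝ) : Prop :=
  (∀ a b x y, 0 ≤ P a b x y) ∧ ∀ x y, ∑ a, ∑ b, P a b x y = 1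

/-- The no-signaling conditions. -/
def NoSignaling {r s : ℕ} (P : Fin r → Fin r → Fin s → Fin s → ℝ) : Prop :=
  (∀ b x x' y, ∑ a, P a b x y = ∑ a, P a b x' y) ∧
  (∀ a x y y', ∑ b, P a b x y = ∑ b, P a b x y')

/-- Local (local-hidden-variable) behavior. -/
def IsLocal {r s : ℕ} (P : Fin r → Fin r → Fin s → Fin s → ℝ) : Prop :=
  ∃ (n : ℕ) (q : Fin n → ℝ) (PA : Fin r → Fin s → Fin n → ℝ)
    (PB : Fin r → Fin s → Fin n → ℝ),
    IsDist q ∧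
    (∀ x l, (∀ a, 0 ≤ PA a x l) ∧ ∑ a, PA a x l = 1) ∧
    (∀ y l, (∀ b, 0 ≤ PB b y l) ∧ ∑ b, PB b y l = 1) ∧
    (∀ a b x y, P a b x y = ∑ l, q l * PA a x l * PB b y l)

/-- Output distribution `P(·,·|x,y)` of a behavior for fixed inputs. -/
def outDist {r s : ℕ} (P : Fin r → Fin r → Fin s → Fin s → ℝ) (x y : Fin s) :
    Fin r × Fin r → ℝ := fun ab => P ab.1 ab.2 x y

/-- The behavior relative entropy `S_b(P‖P')`: the maximum over input pairs
`(x,y)` of the relative entropy of the output distributions. -/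
noncomputable def Sb {r s : ℕ} (P P' : Fin r → Fin r → Fin s → Fin s → ℝ) : ℝ≥0∞ :=
  Finset.univ.sup fun xy : Fin s × Fin s =>
    relEnt (outDist P xy.1 xy.2) (outDist P' xy.1 xy.2)

/-- A global wiring from the (r,s) scenario to the (rf,sf) scenario. -/
structure GlobalWiring (r s rf sf : ℕ) where
  I : Fin s → Fin s → Fin sf → Fin sf → ℝ          -- I x y χ ψ  =  I(x,y|χ,ψ)
  O : Fin rf → Fin rf → Fin r → Fin r → Fin s → Fin s → Fin sf → Fin sf → ℝ
    -- O α β a b x y χ ψ  =  O(α,β|a,b,x,y,χ,ψ)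
  I_nonneg : ∀ x y χ ψ, 0 ≤ I x y χ ψ
  I_sum : ∀ χ ψ, ∑ x, ∑ y, I x y χ ψ = 1
  O_nonneg : ∀ α β a b x y χ ψ, 0 ≤ O α β a b x y χ ψ
  O_sum : ∀ a b x y χ ψ, ∑ α, ∑ β, O α β a b x y χ ψ = 1

/-- Action of a global wiring on a behavior. -/
noncomputable def GlobalWiring.apply {r s rf sf : ℕ} (W : GlobalWiring r s rf sf)
    (P : Fin r → Fin r → Fin s → Fin s → ℝ) :
    Fin rf → Fin rf → Fin sf → Fin sf → ℝ :=
  fun α β χ ψ => ∑ a, ∑ b, ∑ x, ∑ y,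
    W.O α β a b x y χ ψ * P a b x y * W.I x y χ ψ

/-- LOSR wiring: a global wiring whose input and output boxes are local. -/
def GlobalWiring.IsLOSR {r s rf sf : ℕ} (W : GlobalWiring r s rf sf) : Prop :=
  ∃ (n m : ℕ) (q : Fin n → ℝ) (q' : Fin m → ℝ)
    (IA : Fin s → Fin sf → Fin n → ℝ) (IB : Fin s → Fin sf → Fin n → ℝ)
    (OA : Fin rf → Fin r → Fin s → Fin sf → Fin m → ℝ)
    (OB : Fin rf → Fin r → Fin s → Fin sf → Fin m → ℝ),
    IsDist q ∧ IsDist q' ∧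
    (∀ χ l, (∀ x, 0 ≤ IA x χ l) ∧ ∑ x, IA x χ l = 1) ∧
    (∀ ψ l, (∀ y, 0 ≤ IB y ψ l) ∧ ∑ y, IB y ψ l = 1) ∧
    (∀ a x χ u, (∀ α, 0 ≤ OA α a x χ u) ∧ ∑ α, OA α a x χ u = 1) ∧
    (∀ b y ψ u, (∀ β, 0 ≤ OB β b y ψ u) ∧ ∑ β, OB β b y ψ u = 1) ∧
    (∀ x y χ ψ, W.I x y χ ψ = ∑ l, q l * IA x χ l * IB y ψ l) ∧
    (∀ α β a b x y χ ψ,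
      W.O α β a b x y χ ψ = ∑ u, q' u * OA α a x χ u * OB β b y ψ u)

/-- UCLOSR wiring: a global wiring whose input and output boxes are products. -/
def GlobalWiring.IsUCLOSR {r s rf sf : ℕ} (W : GlobalWiring r s rf sf) : Prop :=
  ∃ (IA : Fin s → Fin sf → ℝ) (IB : Fin s → Fin sf → ℝ)
    (OA : Fin rf → Fin r → Fin s → Fin sf → ℝ)
    (OB : Fin rf → Fin r → Fin s → Fin sf → ℝ),
    (∀ χ, (∀ x, 0 ≤ IA x χ) ∧ ∑ x, IA x χ = 1) ∧
    (∀ ψ, (∀ y, 0 ≤ IB y ψ) ∧ ∑ y, IB y ψ = 1) ∧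
    (∀ a x χ, (∀ α, 0 ≤ OA α a x χ) ∧ ∑ α, OA α a x χ = 1) ∧
    (∀ b y ψ, (∀ β, 0 ≤ OB β b y ψ) ∧ ∑ β, OB β b y ψ = 1) ∧
    (∀ x y χ ψ, W.I x y χ ψ = IA x χ * IB y ψ) ∧
    (∀ α β a b x y χ ψ, W.O α β a b x y χ ψ = OA α a x χ * OB β b y ψ)

/-- The relative entropy of nonlocality `S_nl`. -/
noncomputable def Snl {r s : ℕ} (P : Fin r → Fin r → Fin s → Fin s → ℝ) : ℝ≥0∞ :=
  ⨅ (Q : Fin r → Fin r → Fin s → Fin s → ℝ) (_ : IsBehavior Q ∧ IsLocal Q), Sb P Q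

/-- The uniform-input statistical strength `S_u`. -/
noncomputable def Su {r s : ℕ} (P : Fin r → Fin r → Fin s → Fin s → ℝ) : ℝ≥0∞ :=
  ⨅ (Q : Fin r → Fin r → Fin s → Fin s → ℝ) (_ : IsBehavior Q ∧ IsLocal Q),
    ((s : ℝ≥0∞) ^ 2)⁻¹ * ∑ x, ∑ y, relEnt (outDist P x y) (outDist Q x y)

/-- The uncorrelated-input statistical strength `S_uc`. -/
noncomputable def Suc {r s : ℕ} (P : Fin r → Fin r → Fin s → Fin s → ℝ) : ℝ≥0∞ :=
  ⨆ (DA : Fin s → ℝ) (DB : Fin s → ℝ) (_ : IsDist DA ∧ IsDist DB),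
    ⨅ (Q : Fin r → Fin r → Fin s → Fin s → ℝ) (_ : IsBehavior Q ∧ IsLocal Q),
      ∑ x, ∑ y, ENNReal.ofReal (DA x * DB y) *
        relEnt (outDist P x y) (outDist Q x y)

/-! A local model of `Q` composed with the local input and output boxes of an LOSR wiring `W` is
a local model of `W(Q)`. For fixed final inputs `(χ,ψ)`, `W(P)(·,·|χ,ψ)` is the image under the
output box of the joint distribution `I(x,y|χ,ψ) P(a,b|x,y)`, so by the data processing inequality
(a consequence of the log-sum inequality) its relative entropy to `W(Q)(·,·|χ,ψ)` is at most that
of the joint distributions, an `I`-average of the `S(P(·,·|x,y)‖Q(·,·|x,y))`. Hence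
`S_b(W(P)‖W(Q)) ≤ S_b(P‖Q)`, and taking the infimum over local `Q` gives monotonicity. -/

section RelEnt

variable {Z : Type*} [Fintype Z]

lemma relEnt_self (p : Z → ℝ) : relEnt p p = 0 := by
  rw [relEnt, if_neg fun ⟨_, hp, hq⟩ => hp hq, ENNReal.ofReal_eq_zero]
  refine (Finset.sum_eq_zero fun z _ => ?_).le
  rcases eq_or_ne (p z) 0 with h | h <;> simp [h]

lemma relEnt_eq_top {p q : Z → ℝ} {z : Z} (hp : p z ≠ 0) (hq : q z = 0) : relEnt p q = ⊤ :=
  if_pos ⟨z, hp, hq⟩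

lemma relEnt_eq_ofReal {p q : Z → ℝ} (hpq : ∀ z, q z = 0 → p z = 0) :
    relEnt p q = ENNReal.ofReal (∑ z, p z * Real.log (p z / q z)) :=
  if_neg fun ⟨z, hp, hq⟩ => hp (hpq z hq)

lemma ofReal_le_relEnt (p q : Z → ℝ) :
    ENNReal.ofReal (∑ z, p z * Real.log (p z / q z)) ≤ relEnt p q := by
  unfold relEnt
  split_ifs <;> simp

end RelEnt

lemma mul_log_add_sub_le_mul_log_div {a b c : ℝ} (ha : 0 ≤ a) (hb : 0 ≤ b) (hc : 0 < c)
    (hab : b = 0 → a = 0) : a * Real.log c + a - b * c ≤ a * Real.log (a / b) := by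
  rcases ha.eq_or_lt with rfl | ha
  · simpa using mul_nonneg hb hc.le
  have hb : 0 < b := hb.lt_of_ne fun h => ha.ne' (hab h.symm)
  have hlog := Real.one_sub_inv_le_log_of_pos (show 0 < a / (b * c) by positivity)
  rw [← div_div, Real.log_div (by positivity) hc.ne'] at hlog
  have hmul : a * (1 - (a / b / c)⁻¹) = a - b * c := by field_simp
  nlinarith [mul_le_mul_of_nonneg_left hlog ha.le]

/-- The log-sum inequality. -/
theorem sum_mul_log_div_sum_le {ι : Type*} [Fintype ι] {a b : ι → ℝ} (ha : ∀ i, 0 ≤ a i)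
    (hb : ∀ i, 0 ≤ b i) (hab : ∀ i, b i = 0 → a i = 0) :
    (∑ i, a i) * Real.log ((∑ i, a i) / ∑ i, b i) ≤ ∑ i, a i * Real.log (a i / b i) := by
  set A := ∑ i, a i
  set B := ∑ i, b i
  rcases (Finset.sum_nonneg fun i _ => ha i : 0 ≤ A).eq_or_lt with hA | hA
  · have ha0 := (Finset.sum_eq_zero_iff_of_nonneg fun i _ => ha i).1 hA.symm
    simp [show A = 0 from hA.symm, ha0]
  have hB : 0 < B := by
    refine (Finset.sum_nonneg fun i _ => hb i).lt_of_ne fun hB => hA.ne' ?_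
    have hb0 := (Finset.sum_eq_zero_iff_of_nonneg fun i _ => hb i).1 hB.symm
    exact Finset.sum_eq_zero fun i hi => hab i (hb0 i hi)
  calc A * Real.log (A / B) = ∑ i, (a i * Real.log (A / B) + a i - b i * (A / B)) := by
        rw [Finset.sum_sub_distrib, Finset.sum_add_distrib, ← Finset.sum_mul, ← Finset.sum_mul]
        field_simp
        ring
    _ ≤ ∑ i, a i * Real.log (a i / b i) := Finset.sum_le_sum fun i _ =>
        mul_log_add_sub_le_mul_log_div (ha i) (hb i) (div_pos hA hB) (hab i)

section Stochastic

variable {ι κ : Type*} [Fintype ι] [Fintype κ]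

lemma IsDist.map {p : ι → ℝ} {K : ι → κ → ℝ} (hp : IsDist p) (hK : ∀ i, IsDist (K i)) :
    IsDist fun j => ∑ i, K i j * p i := by
  refine ⟨fun j => Finset.sum_nonneg fun i _ => mul_nonneg ((hK i).1 j) (hp.1 i), ?_⟩
  rw [Finset.sum_comm]
  simp [← Finset.sum_mul, (hK _).2, hp.2]

lemma IsDist.joint {w : κ → ℝ} {p : κ → ι → ℝ} (hw : IsDist w) (hp : ∀ y, IsDist (p y)) :
    IsDist fun z : ι × κ => p z.2 z.1 * w z.2 := by
  refine ⟨fun z => mul_nonneg ((hp _).1 _) (hw.1 _), ?_⟩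
  rw [Fintype.sum_prod_type_right]
  simp [← Finset.sum_mul, (hp _).2, hw.2]

theorem relEnt_map_le {K : ι → κ → ℝ} (hK : ∀ i, IsDist (K i)) {p q : ι → ℝ}
    (hp : ∀ i, 0 ≤ p i) (hq : ∀ i, 0 ≤ q i) :
    relEnt (fun j => ∑ i, K i j * p i) (fun j => ∑ i, K i j * q i) ≤ relEnt p q := by
  by_cases hpq : ∀ i, q i = 0 → p i = 0
  swap
  · push Not at hpq
    obtain ⟨i, hq0, hp0⟩ := hpq
    simp [relEnt_eq_top hp0 hq0]
  have hKpq : ∀ i j, K i j * q i = 0 → K i j * p i = 0 := fun i j h => by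
    rcases mul_eq_zero.1 h with h | h <;> simp [h, hpq i]
  have hmap : ∀ j, ∑ i, K i j * q i = 0 → ∑ i, K i j * p i = 0 := fun j h => by
    have h0 := (Finset.sum_eq_zero_iff_of_nonneg fun i _ => mul_nonneg ((hK i).1 j) (hq i)).1 h
    exact Finset.sum_eq_zero fun i hi => hKpq i j (h0 i hi)
  rw [relEnt_eq_ofReal hmap, relEnt_eq_ofReal hpq]
  apply ENNReal.ofReal_le_ofReal
  calc ∑ j, (∑ i, K i j * p i) * Real.log ((∑ i, K i j * p i) / ∑ i, K i j * q i)
      ≤ ∑ j, ∑ i, K i j * p i * Real.log (K i j * p i / (K i j * q i)) :=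
        Finset.sum_le_sum fun j _ => sum_mul_log_div_sum_le
          (fun i => mul_nonneg ((hK i).1 j) (hp i)) (fun i => mul_nonneg ((hK i).1 j) (hq i))
          fun i => hKpq i j
    _ = ∑ j, ∑ i, K i j * (p i * Real.log (p i / q i)) := by
        refine Finset.sum_congr rfl fun j _ => Finset.sum_congr rfl fun i _ => ?_
        rcases eq_or_ne (K i j) 0 with h | h
        · simp [h]
        · rw [mul_div_mul_left _ _ h, mul_assoc]
    _ = ∑ i, p i * Real.log (p i / q i) := by
        rw [Finset.sum_comm]
        simp [← Finset.sum_mul, (hK _).2]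

theorem relEnt_joint_le {w : κ → ℝ} (hw : IsDist w) {p q : κ → ι → ℝ} {c : ℝ≥0∞}
    (hc : ∀ y, relEnt (p y) (q y) ≤ c) :
    relEnt (fun z : ι × κ => p z.2 z.1 * w z.2) (fun z => q z.2 z.1 * w z.2) ≤ c := by
  by_cases hpq : ∀ z : ι × κ, q z.2 z.1 * w z.2 = 0 → p z.2 z.1 * w z.2 = 0
  swap
  · push Not at hpq
    obtain ⟨⟨x, y⟩, hq0, hp0⟩ := hpq
    have hq0 : q y x = 0 := (mul_eq_zero.1 hq0).resolve_right (right_ne_zero_of_mul hp0)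
    have hcy := hc y
    rw [relEnt_eq_top (left_ne_zero_of_mul hp0) hq0, top_le_iff] at hcy
    simp [hcy]
  rw [relEnt_eq_ofReal hpq]
  calc ENNReal.ofReal (∑ z : ι × κ, p z.2 z.1 * w z.2 *
          Real.log (p z.2 z.1 * w z.2 / (q z.2 z.1 * w z.2)))
      = ENNReal.ofReal (∑ y, w y * ∑ x, p y x * Real.log (p y x / q y x)) := by
        rw [Fintype.sum_prod_type_right]
        refine congrArg _ (Finset.sum_congr rfl fun y _ => ?_)
        rcases eq_or_ne (w y) 0 with h | h
        · simp [h]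
        · simp_rw [mul_div_mul_right _ _ h, Finset.mul_sum]
          exact Finset.sum_congr rfl fun x _ => by ring
    _ ≤ ∑ y, ENNReal.ofReal (w y) * ENNReal.ofReal (∑ x, p y x * Real.log (p y x / q y x)) := by
        simp_rw [← ENNReal.ofReal_mul (hw.1 _)]
        exact Finset.le_sum_of_subadditive _ ENNReal.ofReal_zero.le
          (fun _ _ => ENNReal.ofReal_add_le) _ _
    _ ≤ ∑ y, ENNReal.ofReal (w y) * c := by
        gcongr with y
        exact (ofReal_le_relEnt _ _).trans (hc y)
    _ = c := by
        rw [← Finset.sum_mul, ← ENNReal.ofReal_sum_of_nonneg fun y _ => hw.1 y, hw.2,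
          ENNReal.ofReal_one, one_mul]

end Stochastic

lemma sum_prodProdProdComm_mul {α β γ δ R : Type*} [Fintype α] [Fintype β] [Fintype γ]
    [Fintype δ] [NonUnitalNonAssocSemiring R] (f : α × γ → R) (g : β × δ → R) :
    ∑ z : (α × β) × γ × δ, f (z.1.1, z.2.1) * g (z.1.2, z.2.2) = (∑ i, f i) * ∑ j, g j := by
  rw [Fintype.sum_mul_sum, ← Fintype.sum_prod_type']
  exact Fintype.sum_equiv (Equiv.prodProdProdComm α β γ δ) _ _ fun _ => rfl

section Bell

variable {r s : ℕ}

lemma isBehavior_iff {P : Fin r → Fin r → Fin s → Fin s → ℝ} :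
    IsBehavior P ↔ ∀ x y, IsDist (outDist P x y) := by
  simp only [IsBehavior, IsDist, outDist, Fintype.sum_prod_type, Prod.forall]
  exact ⟨fun h x y => ⟨fun a b => h.1 a b x y, h.2 x y⟩,
    fun h => ⟨fun a b x y => (h x y).1 a b, fun x y => (h x y).2⟩⟩

lemma isLocal_of_fintype {Λ : Type*} [Fintype Λ] {P : Fin r → Fin r → Fin s → Fin s → ℝ}
    {q : Λ → ℝ} {PA PB : Fin r → Fin s → Λ → ℝ} (hq : IsDist q)
    (hPA : ∀ x l, IsDist (PA · x l)) (hPB : ∀ y l, IsDist (PB · y l))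
    (hP : ∀ a b x y, P a b x y = ∑ l, q l * PA a x l * PB b y l) : IsLocal P := by
  let e := (Fintype.equivFin Λ).symm
  refine ⟨Fintype.card Λ, q ∘ e, fun a x i => PA a x (e i), fun b y i => PB b y (e i),
    ⟨fun i => hq.1 (e i), ?_⟩, fun x i => hPA x (e i), fun y i => hPB y (e i),
    fun a b x y => ?_⟩
  · rw [← hq.2]
    exact e.sum_comp q
  · rw [hP]
    exact (e.sum_comp fun l => q l * PA a x l * PB b y l).symm

lemma relEnt_outDist_le_Sb (P Q : Fin r → Fin r → Fin s → Fin s → ℝ) (x y : Fin s) :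
    relEnt (outDist P x y) (outDist Q x y) ≤ Sb P Q :=
  Finset.le_sup (f := fun xy : Fin s × Fin s =>
    relEnt (outDist P xy.1 xy.2) (outDist Q xy.1 xy.2)) (Finset.mem_univ (x, y))

lemma Sb_self (P : Fin r → Fin r → Fin s → Fin s → ℝ) : Sb P P = 0 :=
  (Finset.sup_eq_bot_iff _ _).2 fun _ _ => relEnt_self _

lemma Snl_le_Sb (P : Fin r → Fin r → Fin s → Fin s → ℝ) {Q : Fin r → Fin r → Fin s → Fin s → ℝ}
    (hQ : IsBehavior Q) (hQl : IsLocal Q) : Snl P ≤ Sb P Q :=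
  iInf₂_le Q ⟨hQ, hQl⟩

lemma Snl_eq_zero_of_isLocal {Q : Fin r → Fin r → Fin s → Fin s → ℝ} (hQ : IsBehavior Q)
    (hQl : IsLocal Q) : Snl Q = 0 :=
  nonpos_iff_eq_zero.1 ((Snl_le_Sb Q hQ hQl).trans_eq (Sb_self Q))

end Bell

namespace GlobalWiring

variable {r s rf sf : ℕ} (W : GlobalWiring r s rf sf)

lemma isDist_I (χ ψ : Fin sf) : IsDist fun xy : Fin s × Fin s => W.I xy.1 xy.2 χ ψ :=
  ⟨fun _ => W.I_nonneg _ _ _ _, by rw [Fintype.sum_prod_type]; exact W.I_sum χ ψ⟩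

lemma isDist_O (a b : Fin r) (x y : Fin s) (χ ψ : Fin sf) :
    IsDist fun αβ : Fin rf × Fin rf => W.O αβ.1 αβ.2 a b x y χ ψ :=
  ⟨fun _ => W.O_nonneg _ _ _ _ _ _ _ _, by rw [Fintype.sum_prod_type]; exact W.O_sum a b x y χ ψ⟩

lemma outDist_apply (P : Fin r → Fin r → Fin s → Fin s → ℝ) (χ ψ : Fin sf) :
    outDist (W.apply P) χ ψ = fun αβ => ∑ z : (Fin r × Fin r) × Fin s × Fin s,
      W.O αβ.1 αβ.2 z.1.1 z.1.2 z.2.1 z.2.2 χ ψ *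
        (outDist P z.2.1 z.2.2 z.1 * W.I z.2.1 z.2.2 χ ψ) := by
  funext αβ
  simp only [outDist, apply, Fintype.sum_prod_type, mul_assoc]

lemma isBehavior_apply {P : Fin r → Fin r → Fin s → Fin s → ℝ} (hP : IsBehavior P) :
    IsBehavior (W.apply P) := by
  refine isBehavior_iff.2 fun χ ψ => ?_
  rw [outDist_apply]
  exact ((W.isDist_I χ ψ).joint fun xy => isBehavior_iff.1 hP xy.1 xy.2).map fun z =>
    W.isDist_O z.1.1 z.1.2 z.2.1 z.2.2 χ ψ

theorem Sb_apply_le {P Q : Fin r → Fin r → Fin s → Fin s → ℝ}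
    (hP : ∀ a b x y, 0 ≤ P a b x y) (hQ : ∀ a b x y, 0 ≤ Q a b x y) :
    Sb (W.apply P) (W.apply Q) ≤ Sb P Q := by
  refine Finset.sup_le fun χψ _ => ?_
  rw [outDist_apply, outDist_apply]
  exact (relEnt_map_le (fun _ => W.isDist_O _ _ _ _ _ _)
    (fun _ => mul_nonneg (hP _ _ _ _) (W.I_nonneg _ _ _ _))
    (fun _ => mul_nonneg (hQ _ _ _ _) (W.I_nonneg _ _ _ _))).trans
    (relEnt_joint_le (W.isDist_I _ _) fun xy => relEnt_outDist_le_Sb P Q xy.1 xy.2)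

end GlobalWiring

theorem GlobalWiring.IsLOSR.isLocal_apply {r s rf sf : ℕ} {W : GlobalWiring r s rf sf}
    (hW : W.IsLOSR) {Q : Fin r → Fin r → Fin s → Fin s → ℝ} (hQ : IsLocal Q) :
    IsLocal (W.apply Q) := by
  obtain ⟨n, m, qI, qO, IA, IB, OA, OB, hqI, hqO, hIA, hIB, hOA, hOB, hI, hO⟩ := hW
  obtain ⟨k, qQ, QA, QB, hqQ, hQA, hQB, hQ⟩ := hQ
  -- the hidden variable `((u, l), i)` joins the shared randomness of the output box, of `Q`
  -- and of the input box
  refine isLocal_of_fintype (Λ := (Fin m × Fin k) × Fin n)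
    (PA := fun α χ t => ∑ ax : Fin r × Fin s,
      OA α ax.1 ax.2 χ t.1.1 * (QA ax.1 ax.2 t.1.2 * IA ax.2 χ t.2))
    (PB := fun β ψ t => ∑ bx : Fin r × Fin s,
      OB β bx.1 bx.2 ψ t.1.1 * (QB bx.1 bx.2 t.1.2 * IB bx.2 ψ t.2))
    (hqI.joint fun _ => hqQ.joint fun _ => hqO)
    (fun χ t => (IsDist.joint (hIA χ t.2) fun x => hQA x t.1.2).map
      fun ax => hOA ax.1 ax.2 χ t.1.1)
    (fun ψ t => (IsDist.joint (hIB ψ t.2) fun y => hQB y t.1.2).map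
      fun bx => hOB bx.1 bx.2 ψ t.1.1)
    fun α β χ ψ => ?_
  change outDist (W.apply Q) χ ψ (α, β) = _
  rw [W.outDist_apply]
  simp only [mul_assoc, ← sum_prodProdProdComm_mul]
  simp only [Finset.mul_sum]
  rw [Finset.sum_comm (s := Finset.univ) (t := Finset.univ)]
  refine Finset.sum_congr rfl fun z _ => ?_
  rw [outDist, hO, hQ, hI, Finset.sum_mul_sum, Finset.sum_mul_sum]
  simp only [Fintype.sum_prod_type, Finset.mul_sum]
  refine Finset.sum_congr rfl fun u _ => Finset.sum_congr rfl fun l _ =>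
    Finset.sum_congr rfl fun i _ => ?_
  ring

theorem Snl_Bell_monotone_general {r s rf sf : ℕ}
    (P : Fin r → Fin r → Fin s → Fin s → ℝ)
    (hP : IsBehavior P)
    (W : GlobalWiring r s rf sf) (hW : W.IsLOSR) :
    Snl (W.apply P) ≤ Snl P ∧
      ∀ Q : Fin r → Fin r → Fin s → Fin s → ℝ,
        IsBehavior Q → IsLocal Q → Snl Q = 0 :=
  ⟨le_iInf₂ fun _ ⟨hQ, hQl⟩ =>
    (Snl_le_Sb _ (W.isBehavior_apply hQ) (hW.isLocal_apply hQl)).trans (W.Sb_apply_le hP.1 hQ.1),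
    fun _ => Snl_eq_zero_of_isLocal⟩

/-- the relative entropy of nonlocality is a Bell nonlocality
monotone. -/
theorem Snl_Bell_monotone {r s rf sf : ℕ} (hrf : 0 < rf)
    (P : Fin r → Fin r → Fin s → Fin s → ℝ)
    (hP : IsBehavior P) (hPns : NoSignaling P)
    (W : GlobalWiring r s rf sf) (hW : W.IsLOSR) :
    Snl (W.apply P) ≤ Snl P ∧
      ∀ Q : Fin r → Fin r → Fin s → Fin s → ℝ,
        IsBehavior Q → IsLocal Q → Snl Q = 0 :=
  Snl_Bell_monotone_general P hP W hW
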